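/- Let n ≥ 1 and let k = (k_1, …, k_n) be a regular tuple of integers. There exists J ∈ GSO_{2n}(ℂ) satisfying J D_k(w) J^{−1} = D_k(w)^{−1} for every w ∈ ℂ× and J² = −1 if and only if n is even; moreover every such J has multiplier ν(J) = −1. -/

import Mathlib

open Matrix

noncomputable section

/-- 2n×2n matrices, indexed by `Fin n ⊕ Fin n`. -/
abbrev Mat (n : ℕ) (k : Type*) := Matrix (Fin n ⊕ Fin n) (Fin n ⊕ Fin n) k

/-- The standard split symmetric form matrix `Q_{2n} = [[0, 1], [1, 0]]`. -/
def Qmat (n : ℕ) : Mat n ℂ := fromBlocks 0 1 1 0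

/-- `A ∈ GO_{2n}(ℂ)` with multiplier `ν`. -/
def inGO (n : ℕ) (A : Mat n ℂ) (ν : ℂ) : Prop :=
  IsUnit A.det ∧ ν ≠ 0 ∧ Aᵀ * Qmat n * A = ν • Qmat n

/-- `A ∈ GSO_{2n}(ℂ)` with multiplier `ν`: in `GO_{2n}` and `det A = ν ^ n`. -/
def inGSO (n : ℕ) (A : Mat n ℂ) (ν : ℂ) : Prop :=
  inGO n A ν ∧ A.det = ν ^ n

/-- `D_k(w) = diag(w^{k_1}, …, w^{k_n}, w^{-k_1}, …, w^{-k_n})`. -/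
def Dk {n : ℕ} (kk : Fin n → ℤ) (w : ℂ) : Mat n ℂ :=
  Matrix.diagonal (Sum.elim (fun i => w ^ kk i) (fun i => w ^ (-kk i)))

/-- A tuple `(k_1, …, k_n)` of integers is regular if each `k_i` is nonzero and
`k_i ≠ ±k_j` for all `i ≠ j`. -/
def Regular {n : ℕ} (kk : Fin n → ℤ) : Prop :=
  (∀ i, kk i ≠ 0) ∧ ∀ i j, i ≠ j → kk i ≠ kk j ∧ kk i ≠ -kk j

/-!
Comparing the `(a, b)` entries of `J * D_k(2) = D_k(2)⁻¹ * J` gives `J a b = 0` unless the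
exponents of `a` and `b` are opposite, which for a regular `k` means `b = a.swap`. Hence
`J = diag(f) * Q` with `Q = Q_{2n}` the permutation matrix of `Sum.swap`. For such `J` both
`J * J = diag(f ∘ swap * f)` and `Jᵀ Q J = diag(f ∘ swap * f) * Q`, so `J² = -1` forces
`ν(J) = -1`, and `det J = (∏ f) * det Q = (-1)ⁿ * (-1)ⁿ = 1`, which equals `ν(J)ⁿ = (-1)ⁿ`
only for even `n`. Conversely `diag(1, -1) * Q` is an anti-involution whenever `n` is even.
-/

namespace Matrix

theorem apply_eq_zero_of_mul_diagonal_eq_diagonal_mul {l m R : Type*} [Fintype l] [Fintype m]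
    [DecidableEq l] [DecidableEq m] [CommRing R] [NoZeroDivisors R] {J : Matrix l m R}
    {d : m → R} {d' : l → R} (h : J * diagonal d = diagonal d' * J) {a : l} {b : m}
    (hab : d b ≠ d' a) : J a b = 0 := by
  have hentry := congrFun₂ h a b
  rw [mul_diagonal, diagonal_mul, mul_comm (d' a)] at hentry
  by_contra hJ
  exact hab (mul_left_cancel₀ hJ hentry)

end Matrix

theorem Complex.two_zpow_injective : Function.Injective fun m : ℤ => (2 : ℂ) ^ m := by
  intro m m' h
  apply zpow_right_injective₀ (two_pos : (0 : ℝ) < 2) (by norm_num)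
  apply Complex.ofReal_injective
  push_cast
  exact h

section Qmat

variable {n : ℕ}

theorem Qmat_eq_toMatrix_sumComm :
    Qmat n = (Equiv.sumComm (Fin n) (Fin n)).toPEquiv.toMatrix := by
  ext (a | a) (b | b) <;> simp [Qmat, one_apply, eq_comm]

theorem Qmat_apply (a b : Fin n ⊕ Fin n) : Qmat n a b = if b = a.swap then 1 else 0 := by
  rw [Qmat_eq_toMatrix_sumComm, PEquiv.toMatrix_apply]
  simp [eq_comm]

theorem transpose_Qmat : (Qmat n)ᵀ = Qmat n := by
  rw [Qmat_eq_toMatrix_sumComm, ← PEquiv.toMatrix_symm, ← Equiv.toPEquiv_symm, Equiv.sumComm_symm]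

theorem Qmat_mul_self : Qmat n * Qmat n = 1 := by
  rw [Qmat_eq_toMatrix_sumComm, ← PEquiv.toMatrix_trans, ← Equiv.toPEquiv_trans]
  nth_rewrite 1 [← Equiv.sumComm_symm]
  rw [Equiv.symm_trans_self, Equiv.toPEquiv_refl, PEquiv.toMatrix_refl]

theorem Qmat_mul_diagonal (d : Fin n ⊕ Fin n → ℂ) :
    Qmat n * diagonal d = diagonal (d ∘ Sum.swap) * Qmat n := by
  ext a b
  rw [mul_diagonal, diagonal_mul, Qmat_apply]
  split_ifs with h <;> simp [h]

theorem det_Qmat : (Qmat n).det = (-1) ^ n := by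
  have hJ : Matrix.J (Fin n) ℂ = diagonal (Sum.elim (-1) 1) * Qmat n := by
    ext (i | i) (j | j) <;> simp [Matrix.J, Qmat, diagonal_mul, one_apply, apply_ite]
  have hdet := SymplecticGroup.det_eq_one (SymplecticGroup.J_mem (Fin n) ℂ)
  rw [hJ, det_mul, det_diagonal, Fintype.prod_sum_type] at hdet
  simp only [Sum.elim_inl, Sum.elim_inr, Pi.neg_apply, Pi.one_apply, Finset.prod_const,
    Finset.card_univ, Fintype.card_fin, one_pow, mul_one] at hdet
  rw [← mul_right_inj' (pow_ne_zero n (neg_ne_zero.2 (one_ne_zero' ℂ))), hdet, ← mul_pow]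
  simp

theorem eq_diagonal_mul_Qmat {J : Mat n ℂ} (hJ : ∀ a b, b ≠ a.swap → J a b = 0) :
    J = diagonal (fun a => J a a.swap) * Qmat n := by
  ext a b
  rw [diagonal_mul, Qmat_apply]
  split_ifs with h
  · rw [h, mul_one]
  · rw [mul_zero, hJ a b h]

end Qmat

section Monomial

variable {n : ℕ} (f : Fin n ⊕ Fin n → ℂ)

theorem diagonal_mul_Qmat_mul_diagonal (d : Fin n ⊕ Fin n → ℂ) :
    diagonal f * Qmat n * diagonal d = diagonal (d ∘ Sum.swap) * (diagonal f * Qmat n) := by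
  rw [Matrix.mul_assoc, Qmat_mul_diagonal, ← Matrix.mul_assoc, ← Matrix.mul_assoc,
    diagonal_mul_diagonal, diagonal_mul_diagonal]
  simp_rw [mul_comm (f _)]

theorem diagonal_mul_Qmat_mul_self :
    diagonal f * Qmat n * (diagonal f * Qmat n) = diagonal fun a => f a.swap * f a := by
  rw [← Matrix.mul_assoc, diagonal_mul_Qmat_mul_diagonal, Matrix.mul_assoc, Matrix.mul_assoc,
    Qmat_mul_self, Matrix.mul_one, diagonal_mul_diagonal]
  rfl

theorem transpose_diagonal_mul_Qmat_mul :
    (diagonal f * Qmat n)ᵀ * Qmat n * (diagonal f * Qmat n) =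
      diagonal (fun a => f a.swap * f a) * Qmat n := by
  rw [transpose_mul, transpose_Qmat, diagonal_transpose, Qmat_mul_diagonal,
    Matrix.mul_assoc (diagonal _) (Qmat n) (Qmat n), Qmat_mul_self, Matrix.mul_one,
    ← Matrix.mul_assoc, diagonal_mul_diagonal]
  rfl

theorem diagonal_mul_Qmat_eq_smul_Qmat_iff (g : Fin n ⊕ Fin n → ℂ) (ν : ℂ) :
    diagonal g * Qmat n = ν • Qmat n ↔ ∀ a, g a = ν := by
  constructor
  · intro h a
    have := congrArg (· * Qmat n) h
    simp only [Matrix.mul_assoc, Qmat_mul_self, smul_mul, Matrix.mul_one,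
      smul_one_eq_diagonal] at this
    exact congrFun (diagonal_injective this) a
  · intro h
    rw [funext h, ← smul_one_eq_diagonal, smul_mul, Matrix.one_mul]

theorem diagonal_mul_Qmat_mul_self_eq_neg_one_iff :
    diagonal f * Qmat n * (diagonal f * Qmat n) = -1 ↔ ∀ a, f a.swap * f a = -1 := by
  rw [diagonal_mul_Qmat_mul_self, ← diagonal_one, diagonal_neg, diagonal_injective.eq_iff,
    funext_iff]

theorem transpose_diagonal_mul_Qmat_mul_eq_smul_iff (ν : ℂ) :
    (diagonal f * Qmat n)ᵀ * Qmat n * (diagonal f * Qmat n) = ν • Qmat n ↔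
      ∀ a, f a.swap * f a = ν := by
  rw [transpose_diagonal_mul_Qmat_mul, diagonal_mul_Qmat_eq_smul_Qmat_iff]

theorem det_diagonal_mul_Qmat (hf : ∀ a, f a.swap * f a = -1) :
    (diagonal f * Qmat n).det = 1 := by
  have hpair (i : Fin n) : f (Sum.inl i) * f (Sum.inr i) = -1 := hf (Sum.inr i)
  rw [det_mul, det_diagonal, det_Qmat, Fintype.prod_sum_type, ← Finset.prod_mul_distrib]
  simp [hpair, ← mul_pow]

end Monomial

section Dk

variable {n : ℕ}

def dkExponent (kk : Fin n → ℤ) : Fin n ⊕ Fin n → ℤ :=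
  Sum.elim kk fun i => -kk i

variable {kk : Fin n → ℤ}

theorem Regular.injective_dkExponent (hreg : Regular kk) :
    Function.Injective (dkExponent kk) := by
  have hne (i j : Fin n) (h : kk i = -kk j) : False := by
    rcases eq_or_ne i j with rfl | hij
    · exact hreg.1 i (by omega)
    · exact (hreg.2 i j hij).2 h
  have heq (i j : Fin n) (h : kk i = kk j) : i = j := by
    by_contra hij
    exact (hreg.2 i j hij).1 h
  rintro (i | i) (j | j) h <;> simp only [dkExponent, Sum.elim_inl, Sum.elim_inr] at h
  · rw [heq i j h]
  · exact (hne i j h).elim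
  · exact (hne j i (by omega)).elim
  · rw [heq i j (by omega)]

theorem dkExponent_swap (a : Fin n ⊕ Fin n) : dkExponent kk a.swap = -dkExponent kk a := by
  rcases a with i | i <;> simp [dkExponent]

theorem Dk_eq_diagonal (w : ℂ) : Dk kk w = diagonal fun a => w ^ dkExponent kk a := by
  rw [Dk]
  congr
  ext (i | i) <;> rfl

theorem inv_Dk {w : ℂ} (hw : w ≠ 0) :
    (Dk kk w)⁻¹ = diagonal ((fun a => w ^ dkExponent kk a) ∘ Sum.swap) := by
  refine inv_eq_right_inv ?_
  rw [Dk_eq_diagonal, diagonal_mul_diagonal, ← diagonal_one]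
  congr
  ext a
  rw [Function.comp_apply, dkExponent_swap, _root_.zpow_neg, mul_inv_cancel₀ (zpow_ne_zero _ hw)]

theorem mul_Dk_mul_inv_eq_inv_iff {J : Mat n ℂ} (hJ : IsUnit J.det) (w : ℂ) :
    J * Dk kk w * J⁻¹ = (Dk kk w)⁻¹ ↔ J * Dk kk w = (Dk kk w)⁻¹ * J := by
  have := invertibleOfIsUnitDet J hJ
  exact mul_inv_eq_iff_eq_mul_of_invertible J _ _

theorem eq_diagonal_mul_Qmat_of_mul_Dk (hreg : Regular kk) {J : Mat n ℂ}
    (hJ : J * Dk kk 2 = (Dk kk 2)⁻¹ * J) : J = diagonal (fun a => J a a.swap) * Qmat n := by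
  rw [inv_Dk two_ne_zero, Dk_eq_diagonal] at hJ
  refine eq_diagonal_mul_Qmat fun a b hb => apply_eq_zero_of_mul_diagonal_eq_diagonal_mul hJ ?_
  intro h
  exact hb (hreg.injective_dkExponent (Complex.two_zpow_injective h))

theorem diagonal_mul_Qmat_mul_Dk (f : Fin n ⊕ Fin n → ℂ) {w : ℂ} (hw : w ≠ 0) :
    diagonal f * Qmat n * Dk kk w = (Dk kk w)⁻¹ * (diagonal f * Qmat n) := by
  rw [inv_Dk hw, Dk_eq_diagonal, diagonal_mul_Qmat_mul_diagonal]

theorem inGO.eq_neg_one_and_det_eq_one (hn : 1 ≤ n) (hreg : Regular kk) {J : Mat n ℂ} {ν : ℂ}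
    (hJ : inGO n J ν) (hconj : J * Dk kk 2 * J⁻¹ = (Dk kk 2)⁻¹) (hsq : J * J = -1) :
    ν = -1 ∧ J.det = 1 := by
  obtain ⟨hunit, -, horth⟩ := hJ
  rw [eq_diagonal_mul_Qmat_of_mul_Dk hreg ((mul_Dk_mul_inv_eq_inv_iff hunit 2).1 hconj)]
    at hsq horth ⊢
  have hf := (diagonal_mul_Qmat_mul_self_eq_neg_one_iff _).1 hsq
  have hν := (transpose_diagonal_mul_Qmat_mul_eq_smul_iff _ ν).1 horth (Sum.inl ⟨0, hn⟩)
  exact ⟨hν.symm.trans (hf _), det_diagonal_mul_Qmat _ hf⟩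

theorem exists_antiinvolution_of_even (kk : Fin n → ℤ) (heven : Even n) :
    ∃ J : Mat n ℂ, inGSO n J (-1) ∧
      (∀ w : ℂ, w ≠ 0 → J * Dk kk w * J⁻¹ = (Dk kk w)⁻¹) ∧ J * J = -1 := by
  let f : Fin n ⊕ Fin n → ℂ := Sum.elim 1 (-1)
  have hf : ∀ a, f a.swap * f a = -1 := by rintro (i | i) <;> simp [f]
  have hdet := det_diagonal_mul_Qmat f hf
  have hunit : IsUnit (diagonal f * Qmat n).det := hdet ▸ isUnit_one
  refine ⟨diagonal f * Qmat n,
    ⟨⟨hunit, by norm_num, (transpose_diagonal_mul_Qmat_mul_eq_smul_iff f _).2 hf⟩, ?_⟩,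
    fun w hw => (mul_Dk_mul_inv_eq_inv_iff hunit w).2 (diagonal_mul_Qmat_mul_Dk f hw),
    (diagonal_mul_Qmat_mul_self_eq_neg_one_iff f).2 hf⟩
  rw [hdet, heven.neg_one_pow]

end Dk

/-- There exists `J ∈ GSO_{2n}(ℂ)` with `J D_k(w) J⁻¹ = D_k(w)⁻¹` for all `w ∈ ℂ×` and
`J² = -1` iff `n` is even; moreover every such `J` has multiplier `-1`. -/
theorem gso_antiinvolution (n : ℕ) (hn : 1 ≤ n) (kk : Fin n → ℤ) (hreg : Regular kk) :
    ((∃ (J : Mat n ℂ) (ν : ℂ), inGSO n J ν ∧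
        (∀ w : ℂ, w ≠ 0 → J * Dk kk w * J⁻¹ = (Dk kk w)⁻¹) ∧ J * J = -1) ↔ Even n) ∧
    (∀ (J : Mat n ℂ) (ν : ℂ), inGSO n J ν →
        (∀ w : ℂ, w ≠ 0 → J * Dk kk w * J⁻¹ = (Dk kk w)⁻¹) → J * J = -1 → ν = -1) := by
  refine ⟨⟨fun ⟨J, ν, hJ, hconj, hsq⟩ => ?_, fun heven => ?_⟩, fun J ν hJ hconj hsq =>
    (hJ.1.eq_neg_one_and_det_eq_one hn hreg (hconj 2 two_ne_zero) hsq).1⟩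
  · obtain ⟨hν, hdet⟩ := hJ.1.eq_neg_one_and_det_eq_one hn hreg (hconj 2 two_ne_zero) hsq
    have hpow : J.det = ν ^ n := hJ.2
    rw [hdet, hν] at hpow
    exact (neg_one_pow_eq_one_iff_even (by norm_num)).1 hpow.symm
  · obtain ⟨J, hJ, hconj, hsq⟩ := exists_antiinvolution_of_even kk heven
    exact ⟨J, -1, hJ, hconj, hsq⟩
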